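/- arXiv:2411.04575 — 5 statements merged into one kernel-verified Lean document; each statement's English description precedes it below -/
import Mathlib

section
/- For every fixed φ ∈ (0,1), the function ψ ↦ H_b(φ(1−ψ) + (1−φ)ψ) − H_b(ψ) is antitone (non-increasing) on the interval [0, 1/2], where H_b(t) = −t·log t − (1−t)·log(1−t) is the binary entropy function (natural logarithm). -/
open Real

/-- Lemma 2 (monotonicity, uncoded forward-with-error case): for fixed `φ ∈ (0,1)`,
the per-bit mutual information `H_b(φ(1−ψ)+(1−φ)ψ) − H_b(ψ)` of a Bernoulli(φ) input
over a binary symmetric channel with crossover `ψ` is non-increasing on `[0, 1/2]`. -/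
theorem bsc_mutual_information_antitone (φ : ℝ) (hφ : φ ∈ Set.Ioo (0:ℝ) 1) :
    AntitoneOn
      (fun ψ : ℝ => Real.binEntropy (φ * (1 - ψ) + (1 - φ) * ψ) - Real.binEntropy ψ)
      (Set.Icc (0:ℝ) (1/2)) := by
  obtain ⟨hφ0, hφ1⟩ := hφ
  apply antitoneOn_of_deriv_nonpos (convex_Icc _ _)
  · exact (Real.binEntropy_continuous.comp (by continuity)).sub
      Real.binEntropy_continuous |>.continuousOn
  · intro ψ hψ
    rw [interior_Icc] at hψ
    obtain ⟨hψ0, hψ2⟩ := hψ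
    have hψ1 : ψ < 1 := by linarith
    set g : ℝ := φ * (1 - ψ) + (1 - φ) * ψ with hg
    have hgψ : ψ ≤ g := by nlinarith
    have hgψ' : g ≤ 1 - ψ := by nlinarith
    have hg0 : g ≠ 0 := (lt_of_lt_of_le hψ0 hgψ).ne'
    have hg1 : g ≠ 1 := by intro h; nlinarith [h]
    have haff : HasDerivAt (fun ψ : ℝ => φ * (1 - ψ) + (1 - φ) * ψ) (1 - 2*φ) ψ := by
      have : HasDerivAt (fun ψ : ℝ => φ * (1 - ψ) + (1 - φ) * ψ)
          (φ * (-1) + (1 - φ) * 1) ψ :=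
        (((hasDerivAt_id ψ).const_sub 1).const_mul φ).add ((hasDerivAt_id ψ).const_mul (1 - φ))
      convert this using 1; ring
    have hd : HasDerivAt
        (fun ψ : ℝ => Real.binEntropy (φ * (1 - ψ) + (1 - φ) * ψ) - Real.binEntropy ψ)
        ((Real.log (1 - g) - Real.log g) * (1 - 2*φ)
          - (Real.log (1 - ψ) - Real.log ψ)) ψ :=
      by have h := ((Real.hasDerivAt_binEntropy hg0 hg1).comp ψ haff).sub
           (Real.hasDerivAt_binEntropy (ne_of_gt hψ0) (by linarith)); exact h
    exact hd.differentiableAt.differentiableWithinAt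
  · intro ψ hψ
    rw [interior_Icc] at hψ
    obtain ⟨hψ0, hψ2⟩ := hψ
    have hψ1 : ψ < 1 := by linarith
    set g : ℝ := φ * (1 - ψ) + (1 - φ) * ψ with hg
    have hgψ : ψ ≤ g := by nlinarith
    have hgψ' : g ≤ 1 - ψ := by nlinarith
    have hg0 : g ≠ 0 := (lt_of_lt_of_le hψ0 hgψ).ne'
    have hg1 : g ≠ 1 := by intro h; nlinarith [h]
    have haff : HasDerivAt (fun ψ : ℝ => φ * (1 - ψ) + (1 - φ) * ψ) (1 - 2*φ) ψ := by
      have : HasDerivAt (fun ψ : ℝ => φ * (1 - ψ) + (1 - φ) * ψ)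
          (φ * (-1) + (1 - φ) * 1) ψ :=
        (((hasDerivAt_id ψ).const_sub 1).const_mul φ).add ((hasDerivAt_id ψ).const_mul (1 - φ))
      convert this using 1; ring
    have hd : HasDerivAt
        (fun ψ : ℝ => Real.binEntropy (φ * (1 - ψ) + (1 - φ) * ψ) - Real.binEntropy ψ)
        ((Real.log (1 - g) - Real.log g) * (1 - 2*φ)
          - (Real.log (1 - ψ) - Real.log ψ)) ψ :=
      by have h := ((Real.hasDerivAt_binEntropy hg0 hg1).comp ψ haff).sub
           (Real.hasDerivAt_binEntropy (ne_of_gt hψ0) (by linarith)); exact h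
    rw [hd.deriv]
    -- key inequality
    have h1 : Real.log ψ ≤ Real.log g := Real.log_le_log hψ0 hgψ
    have h2 : Real.log (1 - g) ≤ Real.log (1 - ψ) :=
      Real.log_le_log (by nlinarith) (by linarith)
    have h3 : Real.log ψ ≤ Real.log (1 - g) := by
      apply Real.log_le_log hψ0; linarith
    have h4 : Real.log g ≤ Real.log (1 - ψ) := by
      apply Real.log_le_log (lt_of_lt_of_le hψ0 hgψ); linarith
    set L : ℝ := Real.log (1 - g) - Real.log g
    set R : ℝ := Real.log (1 - ψ) - Real.log ψ
    have hLR : L ≤ R := by simp only [L, R]; linarith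
    have hLR' : -R ≤ L := by simp only [L, R]; linarith
    have hc : |1 - 2*φ| ≤ 1 := by rw [abs_le]; constructor <;> linarith
    have : L * (1 - 2*φ) ≤ R := by
      calc L * (1 - 2*φ) ≤ |L * (1 - 2*φ)| := le_abs_self _
        _ = |L| * |1 - 2*φ| := abs_mul _ _
        _ ≤ |L| * 1 := by
            apply mul_le_mul_of_nonneg_left hc (abs_nonneg _)
        _ = |L| := mul_one _
        _ ≤ R := abs_le.2 ⟨hLR', hLR⟩
    linarith
end

section
/- Let ι be a nonempty finite index set, c : ι → ℝ with c i > 0 for all i (per-symbol costs), for each i let e_i : ℝ → ℝ be continuous and strictly antitone on [0, ∞) (error probability as a function of transmit power), let P : (ι → ℝ) → ℝ be continuous and monotone with respect to the pointwise order (the perception-error function is non-decreasing in each error probability), and let P̄ ∈ ℝ. Suppose q* : ι → ℝ with q* i ≥ 0 for all i is an optimal power allocation, i.e., P (fun i => e_i (q* i)) ≤ P̄ and for every q : ι → ℝ with q i ≥ 0 for all i and P (fun i => e_i (q i)) ≤ P̄ one has ∑_i c i · q* i ≤ ∑_i c i · q i. If additionally P (fun i => e_i 0) > P̄ (zero power is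 infeasible), then the perception constraint is active at the optimum: P (fun i => e_i (q* i)) = P̄. -/
/-- Corollary 2: in the semantic-aware power allocation problem, with per-symbol
costs `c i > 0`, error probabilities `e i` continuous and strictly decreasing in the
power on `[0,∞)`, and the perception-error function `P` continuous and monotone in
the pointwise order, any optimal power allocation `q*` must satisfy the perception
constraint with equality, provided zero power is infeasible. -/
theorem perception_constraint_active {ι : Type*} [Fintype ι] [Nonempty ι]
    (c : ι → ℝ) (hc : ∀ i, 0 < c i)
    (e : ι → ℝ → ℝ)
    (he_cont : ∀ i, Continuous (e i))
    (he_anti : ∀ i, StrictAntiOn (e i) (Set.Ici (0:ℝ)))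
    (P : (ι → ℝ) → ℝ) (hP_cont : Continuous P) (hP_mono : Monotone P)
    (Pbar : ℝ) (qstar : ι → ℝ) (hq0 : ∀ i, 0 ≤ qstar i)
    (hfeas : P (fun i => e i (qstar i)) ≤ Pbar)
    (hopt : ∀ q : ι → ℝ, (∀ i, 0 ≤ q i) → P (fun i => e i (q i)) ≤ Pbar →
      ∑ i, c i * qstar i ≤ ∑ i, c i * q i)
    (hzero : Pbar < P (fun i => e i 0)) :
    P (fun i => e i (qstar i)) = Pbar := by
  classical
  by_contra hne
  have hlt : P (fun i => e i (qstar i)) < Pbar := lt_of_le_of_ne hfeas hne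
  -- there is some j with qstar j > 0
  obtain ⟨j, hj⟩ : ∃ j, 0 < qstar j := by
    by_contra h
    push_neg at h
    have hq : qstar = fun _ => 0 := funext fun i => le_antisymm (h i) (hq0 i)
    rw [hq] at hlt
    exact absurd hlt (not_lt.mpr hzero.le)
  -- the function of power at coordinate j
  set g : ℝ → ℝ := fun t => P (fun i => e i (Function.update qstar j t i)) with hg
  have hg_cont : Continuous g := by
    have h1 : Continuous fun t : ℝ => (fun i => e i (Function.update qstar j t i)) := by
      apply continuous_pi
      intro i
      by_cases hij : i = j
      · subst hij
        simpa [Function.update_self] using (he_cont i).comp continuous_id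
      · simp only [Function.update_of_ne hij]
        exact continuous_const
    exact hP_cont.comp h1
  have hgq : g (qstar j) < Pbar := by
    have : Function.update qstar j (qstar j) = qstar := Function.update_eq_self j qstar
    simp only [hg, this]
    exact hlt
  -- openness: find δ > 0 with g t < Pbar for |t - qstar j| < δ
  have : {t : ℝ | g t < Pbar} ∈ nhds (qstar j) :=
    (isOpen_lt hg_cont continuous_const).mem_nhds hgq
  obtain ⟨δ, hδ, hball⟩ := Metric.mem_nhds_iff.mp this
  -- choose t
  set t : ℝ := max 0 (qstar j - δ / 2) with ht
  have ht0 : 0 ≤ t := le_max_left _ _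
  have htlt : t < qstar j := by
    apply max_lt hj
    linarith
  have htball : t ∈ Metric.ball (qstar j) δ := by
    rw [Metric.mem_ball, Real.dist_eq, abs_sub_lt_iff]
    constructor
    · linarith
    · have h1 : qstar j - δ / 2 ≤ t := le_max_right _ _
      linarith
  have hgt : g t < Pbar := hball htball
  -- the new allocation
  set q : ι → ℝ := Function.update qstar j t with hqdef
  have hqnn : ∀ i, 0 ≤ q i := by
    intro i
    by_cases hij : i = j
    · subst hij; simp [hqdef, Function.update_self, ht0]
    · simp [hqdef, Function.update_of_ne hij, hq0 i]
  have hqfeas : P (fun i => e i (q i)) ≤ Pbar := hgt.le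
  have hle := hopt q hqnn hqfeas
  -- but the cost strictly decreased
  have hsum : ∑ i, c i * q i < ∑ i, c i * qstar i := by
    apply Finset.sum_lt_sum
    · intro i _
      by_cases hij : i = j
      · subst hij
        have : q i = t := by simp [hqdef]
        rw [this]
        exact mul_le_mul_of_nonneg_left htlt.le (hc i).le
      · simp [hqdef, Function.update_of_ne hij]
    · exact ⟨j, Finset.mem_univ j, by
        have : q j = t := by simp [hqdef]
        rw [this]
        exact mul_lt_mul_of_pos_left htlt (hc j)⟩
  linarith
end

section
/- Let K > 0, N > 0, snr > 0 be reals and α ≥ 0, and set η := ln(1 + snr) − K/N. Then the equation ln(1 + snr) − K/N = α·√(1 − (1 + snr)^{−2}) holds if and only if η ≥ 0 and (2η − 2α)·(2η + 2α)·e^{2η} = −4·e^{−2K/N}·α². -/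
open Real

/-- Appendix B key equivalence (Theorem 1, channel-coded case): with
`η = ln(1+snr) − K/N`, the finite-blocklength equation
`ln(1+snr) − K/N = α·√(1 − (1+snr)^{−2})` holds iff `η ≥ 0` and the generalized
Lambert W equation `(2η − 2α)(2η + 2α)e^{2η} = −4e^{−2K/N}α²` holds. -/
theorem lambertW_equivalence (K N snr α : ℝ)
    (hK : 0 < K) (hN : 0 < N) (hsnr : 0 < snr) (hα : 0 ≤ α) :
    (Real.log (1 + snr) - K / N = α * Real.sqrt (1 - ((1 + snr) ^ 2)⁻¹)) ↔
      (0 ≤ Real.log (1 + snr) - K / N ∧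
        (2 * (Real.log (1 + snr) - K / N) - 2 * α) *
            (2 * (Real.log (1 + snr) - K / N) + 2 * α) *
            Real.exp (2 * (Real.log (1 + snr) - K / N))
          = -4 * Real.exp (-2 * K / N) * α ^ 2) := by
  set η := Real.log (1 + snr) - K / N with hηdef
  set S := (1 + snr) ^ 2 with hSdef
  set s := 1 - S⁻¹ with hsdef
  have hp : (0:ℝ) < 1 + snr := by linarith
  have hS1 : (1:ℝ) ≤ S := by nlinarith
  have hS0 : S ≠ 0 := by positivity
  have hs0 : 0 ≤ s := by
    have : S⁻¹ ≤ 1 := inv_le_one_of_one_le₀ hS1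
    simp [hsdef]; linarith
  have hsq : Real.sqrt s ^ 2 = s := Real.sq_sqrt hs0
  have hsS : s * S = S - 1 := by
    rw [hsdef, sub_mul, inv_mul_cancel₀ hS0, one_mul]
  have hexp : Real.exp (2 * η) = S * Real.exp (-2 * K / N) := by
    rw [hηdef, show 2 * (Real.log (1 + snr) - K / N)
        = Real.log (1 + snr) + Real.log (1 + snr) + (-2 * K / N) by ring,
      Real.exp_add, Real.exp_add, Real.exp_log hp, hSdef]
    ring
  have hE : Real.exp (-2 * K / N) ≠ 0 := Real.exp_ne_zero _
  constructor
  · intro h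
    have hηnn : 0 ≤ η := by
      rw [h]; exact mul_nonneg hα (Real.sqrt_nonneg _)
    refine ⟨hηnn, ?_⟩
    have h2 : η ^ 2 = α ^ 2 * s := by
      rw [h, mul_pow, hsq]
    have h2' : η ^ 2 * S = α ^ 2 * (S - 1) := by
      rw [h2, mul_assoc, hsS]
    rw [hexp]
    linear_combination (4 * Real.exp (-2 * K / N)) * h2'
  · rintro ⟨hηnn, heq⟩
    rw [hexp] at heq
    have h2' : η ^ 2 * S = α ^ 2 * (S - 1) := by
      apply mul_right_cancel₀ hE
      linear_combination heq / 4
    have h2 : η ^ 2 = α ^ 2 * s := by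
      have : η ^ 2 * S = (α ^ 2 * s) * S := by rw [mul_assoc, hsS, h2']
      exact mul_right_cancel₀ hS0 this
    have : η = Real.sqrt (α ^ 2 * s) := by
      rw [← h2, Real.sqrt_sq hηnn]
    rwa [Real.sqrt_mul (sq_nonneg α), Real.sqrt_sq hα] at this
end

section
/- For every real c ≥ 0, the function t ↦ (ln t − c) · t / √(t² − 1) is strictly increasing on the interval (1, ∞). -/
open Real

/-- Analytic monotonicity fact behind the bisection method: for every `c ≥ 0`,
the function `t ↦ (ln t − c)·t/√(t² − 1)` is strictly increasing on `(1, ∞)`. -/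
theorem blocklength_argument_strictMono (c : ℝ) (hc : 0 ≤ c) :
    StrictMonoOn (fun t : ℝ => (Real.log t - c) * t / Real.sqrt (t ^ 2 - 1))
      (Set.Ioi (1:ℝ)) := by
  have key : ∀ x ∈ Set.Ioi (1:ℝ),
      HasDerivAt (fun t : ℝ => (Real.log t - c) * t / Real.sqrt (t ^ 2 - 1))
        ((x ^ 2 - 1 + c - Real.log x) / Real.sqrt (x ^ 2 - 1) ^ 3) x := by
    intro x hx
    have hx1 : (1:ℝ) < x := hx
    have hx0 : 0 < x := lt_trans one_pos hx1
    have hs : 0 < x ^ 2 - 1 := by nlinarith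
    have hspos : 0 < Real.sqrt (x ^ 2 - 1) := Real.sqrt_pos.mpr hs
    have hs2 : Real.sqrt (x ^ 2 - 1) ^ 2 = x ^ 2 - 1 := Real.sq_sqrt hs.le
    have hinner : HasDerivAt (fun t : ℝ => t ^ 2 - 1) (2 * x) x := by
      simpa using ((hasDerivAt_pow 2 x).sub_const 1)
    have hsq : HasDerivAt (fun t : ℝ => Real.sqrt (t ^ 2 - 1))
        (1 / (2 * Real.sqrt (x ^ 2 - 1)) * (2 * x)) x :=
      (Real.hasDerivAt_sqrt hs.ne').comp x hinner
    have hnum : HasDerivAt (fun t : ℝ => (Real.log t - c) * t)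
        (x⁻¹ * x + (Real.log x - c) * 1) x := by
      simpa [Pi.mul_def] using ((Real.hasDerivAt_log hx0.ne').sub_const c).mul (hasDerivAt_id x)
    have hdiv := hnum.div hsq hspos.ne'
    set s := Real.sqrt (x ^ 2 - 1) with hsdef
    have hnum2 : (x⁻¹ * x + (Real.log x - c) * 1) * s -
        (Real.log x - c) * x * (1 / (2 * s) * (2 * x)) = (x ^ 2 - 1 + c - Real.log x) / s := by
      rw [inv_mul_cancel₀ hx0.ne']
      rw [eq_div_iff hspos.ne']
      have hinv : s * s⁻¹ = 1 := mul_inv_cancel₀ hspos.ne'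
      linear_combination (1 + (Real.log x - c)) * hs2 - (Real.log x - c) * x ^ 2 * hinv
    have heq : ((x⁻¹ * x + (Real.log x - c) * 1) * s -
        (Real.log x - c) * x * (1 / (2 * s) * (2 * x))) / s ^ 2
        = (x ^ 2 - 1 + c - Real.log x) / s ^ 3 := by
      rw [hnum2, div_div, ← pow_succ']
    rw [heq] at hdiv
    exact heq ▸ hdiv
  have hmono := strictMonoOn_of_deriv_pos (convex_Ioi (1:ℝ))
    (fun x hx => (key x hx).continuousAt.continuousWithinAt)
    (fun x hx => by
      rw [interior_Ioi] at hx
      rw [(key x hx).deriv]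
      have hx1 : (1:ℝ) < x := hx
      have hs : 0 < x ^ 2 - 1 := by nlinarith
      have hspos : 0 < Real.sqrt (x ^ 2 - 1) := Real.sqrt_pos.mpr hs
      have hlog : Real.log x < x - 1 :=
        Real.log_lt_sub_one_of_pos (lt_trans one_pos hx1) hx1.ne'
      apply div_pos
      · nlinarith
      · positivity)
  exact hmono
end

section
/- Let Q(x) = ∫_x^∞ (1/√(2π)) e^{−u²/2} du be the Gaussian Q-function, and let N > 0 and K > 0 be reals. Then the finite-blocklength block error rate bound Ψ(snr) := Q( (ln 2) · √( N / (1 − (1 + snr)^{−2}) ) · ( log₂(1 + snr) − K/N ) ) is strictly antitone in snr on (0, ∞). -/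
open Real

/-- The Gaussian Q-function: the standard normal tail probability
`Q(x) = ∫_x^∞ (1/√(2π)) e^{−u²/2} du`. -/
noncomputable def gaussQ (x : ℝ) : ℝ :=
  ∫ u in Set.Ioi x, (1 / Real.sqrt (2 * Real.pi)) * Real.exp (-u ^ 2 / 2)

lemma integrable_gauss :
    MeasureTheory.Integrable
      (fun u : ℝ => (1 / Real.sqrt (2 * Real.pi)) * Real.exp (-u ^ 2 / 2)) := by
  have h : MeasureTheory.Integrable (fun u : ℝ => Real.exp (-(1/2 : ℝ) * u ^ 2)) :=
    integrable_exp_neg_mul_sq (by norm_num)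
  have := h.const_mul (1 / Real.sqrt (2 * Real.pi))
  convert this using 2 with u
  ring_nf

lemma gaussQ_strictAnti : StrictAnti gaussQ := by
  intro x y hxy
  have hint : ∀ s : Set ℝ, MeasureTheory.IntegrableOn
      (fun u : ℝ => (1 / Real.sqrt (2 * Real.pi)) * Real.exp (-u ^ 2 / 2)) s :=
    fun s => integrable_gauss.integrableOn
  have hunion : Set.Ioc x y ∪ Set.Ioi y = Set.Ioi x := Set.Ioc_union_Ioi_eq_Ioi hxy.le
  have hsplit : gaussQ x = (∫ u in Set.Ioc x y,
      (1 / Real.sqrt (2 * Real.pi)) * Real.exp (-u ^ 2 / 2)) + gaussQ y := by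
    unfold gaussQ
    rw [← hunion, MeasureTheory.setIntegral_union (Set.Ioc_disjoint_Ioi le_rfl)
      measurableSet_Ioi (hint _) (hint _)]
  have hpos : 0 < ∫ u in Set.Ioc x y,
      (1 / Real.sqrt (2 * Real.pi)) * Real.exp (-u ^ 2 / 2) := by
    rw [MeasureTheory.setIntegral_pos_iff_support_of_nonneg_ae ?_ (hint _)]
    · have hsupp : Function.support
          (fun u : ℝ => (1 / Real.sqrt (2 * Real.pi)) * Real.exp (-u ^ 2 / 2)) = Set.univ := by
        ext u
        simp only [Function.mem_support, Set.mem_univ, iff_true]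
        positivity
      rw [hsupp, Set.univ_inter, Real.volume_Ioc]
      simp [hxy]
    · filter_upwards with u
      positivity
  linarith [hsplit]

/-- The inner argument of the Q-function is strictly increasing on `(0,∞)`. -/
lemma inner_strictMono (N K : ℝ) (hN : 0 < N) (hK : 0 < K) :
    StrictMonoOn
      (fun snr : ℝ =>
        Real.log 2 * Real.sqrt (N / (1 - ((1 + snr) ^ 2)⁻¹)) *
          (Real.logb 2 (1 + snr) - K / N))
      (Set.Ioi (0:ℝ)) := by
  have hL : 0 < Real.log 2 := Real.log_pos (by norm_num)
  have hL0 : Real.log 2 ≠ 0 := ne_of_gt hL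
  -- the function rewritten with `log` instead of `logb`
  have hfg : (fun snr : ℝ =>
        Real.log 2 * Real.sqrt (N / (1 - ((1 + snr) ^ 2)⁻¹)) *
          (Real.logb 2 (1 + snr) - K / N))
      = (fun s : ℝ => Real.log 2 * (Real.sqrt (N / (1 - ((1 + s) ^ 2)⁻¹)) *
          (Real.log (1 + s) / Real.log 2 - K / N))) := by
    funext s
    simp [Real.logb, mul_assoc]
  rw [hfg]
  set g : ℝ → ℝ := fun s : ℝ => Real.log 2 * (Real.sqrt (N / (1 - ((1 + s) ^ 2)⁻¹)) *
          (Real.log (1 + s) / Real.log 2 - K / N)) with hg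
  have key : ∀ s ∈ Set.Ioi (0:ℝ), ∃ d, HasDerivAt g d s ∧ 0 < d := by
    intro s hs
    have hs0 : (0:ℝ) < s := hs
    have ht : (1:ℝ) < 1 + s := by linarith
    have ht0 : (0:ℝ) < 1 + s := by linarith
    have ht0' : (1:ℝ) + s ≠ 0 := ne_of_gt ht0
    have hu : (0:ℝ) < 1 - ((1 + s) ^ 2)⁻¹ := by
      have : ((1 + s) ^ 2)⁻¹ < 1 := by
        rw [inv_lt_one_iff₀]; right; nlinarith
      linarith
    have hu0 : (1:ℝ) - ((1 + s) ^ 2)⁻¹ ≠ 0 := ne_of_gt hu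
    have hNu : 0 < N / (1 - ((1 + s) ^ 2)⁻¹) := div_pos hN hu
    have h1 : HasDerivAt (fun s : ℝ => 1 + s) 1 s := by
      simpa using (hasDerivAt_id s).const_add 1
    have h2 : HasDerivAt (fun s : ℝ => (1 + s) ^ 2) (2 * (1 + s)) s := by
      simpa using h1.fun_pow 2
    have h3 : HasDerivAt (fun s : ℝ => ((1 + s) ^ 2)⁻¹)
        (-(2 * (1 + s)) / ((1 + s) ^ 2) ^ 2) s :=
      h2.inv (by positivity)
    have h4 : HasDerivAt (fun s : ℝ => 1 - ((1 + s) ^ 2)⁻¹)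
        (2 * (1 + s) / ((1 + s) ^ 2) ^ 2) s := by
      have := h3.const_sub 1
      exact this.congr_deriv (by ring)
    have h5 : HasDerivAt (fun s : ℝ => N / (1 - ((1 + s) ^ 2)⁻¹))
        (-(N * (2 * (1 + s)) / ((1 + s) ^ 2) ^ 2) / (1 - ((1 + s) ^ 2)⁻¹) ^ 2) s := by
      have := (hasDerivAt_const s N).div h4 hu0
      exact this.congr_deriv (by ring)
    have h6 : HasDerivAt (fun s : ℝ => Real.sqrt (N / (1 - ((1 + s) ^ 2)⁻¹)))
        ((-(N * (2 * (1 + s)) / ((1 + s) ^ 2) ^ 2) / (1 - ((1 + s) ^ 2)⁻¹) ^ 2) /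
          (2 * Real.sqrt (N / (1 - ((1 + s) ^ 2)⁻¹)))) s :=
      h5.sqrt (ne_of_gt hNu)
    have hlog : HasDerivAt (fun s : ℝ => Real.log (1 + s)) (1 / (1 + s)) s :=
      h1.log ht0'
    have h7 : HasDerivAt (fun s : ℝ => Real.log (1 + s) / Real.log 2 - K / N)
        (1 / (1 + s) / Real.log 2) s :=
      (hlog.div_const (Real.log 2)).sub_const (K / N)
    have hprod := (h6.mul h7).const_mul (Real.log 2)
    refine ⟨_, hprod, ?_⟩
    -- now prove positivity of the derivative
    set S : ℝ := Real.sqrt (N / (1 - ((1 + s) ^ 2)⁻¹)) with hSdef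
    set u : ℝ := 1 - ((1 + s) ^ 2)⁻¹ with hudef
    set B : ℝ := Real.log (1 + s) / Real.log 2 - K / N with hBdef
    have hS : 0 < S := Real.sqrt_pos.mpr hNu
    have hS0 : S ≠ 0 := ne_of_gt hS
    have hS2 : S ^ 2 = N / u := Real.sq_sqrt (le_of_lt hNu)
    have hS2' : S ^ 2 * u = N := by rw [hS2]; field_simp
    clear_value S u B
    have e1 : Real.log 2 *
        ((-(N * (2 * (1 + s)) / ((1 + s) ^ 2) ^ 2) / u ^ 2) / (2 * S) * B
          + S * (1 / (1 + s) / Real.log 2))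
        = S / (1 + s) - Real.log 2 * N * B / ((1 + s) ^ 3 * S * u ^ 2) := by
      field_simp
      ring
    rw [e1]
    rw [sub_pos]
    rw [div_lt_div_iff₀ (by positivity) ht0]
    have hut : u * (1 + s) ^ 2 = (1 + s) ^ 2 - 1 := by
      rw [hudef]; field_simp
    have hlogt : Real.log (1 + s) < (1 + s) - 1 :=
      Real.log_lt_sub_one_of_pos ht0 (by intro h; rw [h] at ht; linarith)
    have hLB : Real.log 2 * B < (1 + s) ^ 2 - 1 := by
      have hLB' : Real.log 2 * B = Real.log (1 + s) - Real.log 2 * (K / N) := by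
        rw [hBdef]; field_simp
      have hKN : 0 < Real.log 2 * (K / N) := mul_pos hL (div_pos hK hN)
      have hexp : (1 + s) ^ 2 - 1 = 2 * s + s ^ 2 := by ring
      nlinarith [sq_nonneg s, hs0, hexp, hlogt, hKN, hLB']
    have hSS : S * ((1 + s) ^ 3 * S * u ^ 2) = N * u * (1 + s) ^ 3 := by
      have : S * ((1 + s) ^ 3 * S * u ^ 2) = (S ^ 2 * u) * (u * (1 + s) ^ 3) := by ring
      rw [this, hS2']
      ring
    rw [hSS]
    -- need : log 2 * N * B * (1+s) < N * u * (1+s)^3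
    have h2' : Real.log 2 * B * ((1 + s) * N) < ((1 + s) ^ 2 - 1) * ((1 + s) * N) := by
      apply mul_lt_mul_of_pos_right hLB (by positivity)
    have hueq : N * u * (1 + s) ^ 3 = ((1 + s) ^ 2 - 1) * ((1 + s) * N) := by
      have : N * u * (1 + s) ^ 3 = (u * (1 + s) ^ 2) * ((1 + s) * N) := by ring
      rw [this, hut]
    rw [hueq]
    calc Real.log 2 * N * B * (1 + s) = Real.log 2 * B * ((1 + s) * N) := by ring
      _ < ((1 + s) ^ 2 - 1) * ((1 + s) * N) := h2'
  have hderiv : ∀ x ∈ interior (Set.Ioi (0:ℝ)), 0 < deriv g x := by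
    intro x hx
    rw [interior_Ioi] at hx
    obtain ⟨d, hd, hdpos⟩ := key x hx
    rwa [hd.deriv]
  have hcont : ContinuousOn g (Set.Ioi (0:ℝ)) := by
    intro x hx
    obtain ⟨d, hd, _⟩ := key x hx
    exact hd.continuousAt.continuousWithinAt
  exact strictMonoOn_of_deriv_pos (convex_Ioi 0) hcont hderiv

/-- The finite-blocklength block error rate bound
`Ψ(snr) = Q(ln2·√(N/(1 − (1+snr)^{−2}))·(log₂(1+snr) − K/N))` is strictly
decreasing in the signal-to-noise ratio on `(0, ∞)`. -/
theorem bler_strictAnti (N K : ℝ) (hN : 0 < N) (hK : 0 < K) :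
    StrictAntiOn
      (fun snr : ℝ =>
        gaussQ (Real.log 2 * Real.sqrt (N / (1 - ((1 + snr) ^ 2)⁻¹)) *
          (Real.logb 2 (1 + snr) - K / N)))
      (Set.Ioi (0:ℝ)) := by
  intro a ha b hb hab
  exact gaussQ_strictAnti (inner_strictMono N K hN hK ha hb hab)
end
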